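/- Let p ∈ [3,4], Ω of finite measure in ℝ², F > 0, and define O₂(z; w, v) := F·∫_Ω |z|^{p-2} w · v for z, w, v ∈ L^4(Ω; ℝ²). Then there exists ℓ > 0 depending only on F, |Ω|, p such that |O₂(z; w, v) − O₂(y; w, v)| ≤ ℓ · (‖z‖_{L^4} + ‖y‖_{L^4})^{p-3} · ‖z − y‖_{L^4} · ‖w‖_{L^4} · ‖v‖_{L^4} for all z, y, w, v ∈ L^4(Ω; ℝ²). -/

import Mathlib

/-!
Since `t ↦ t ^ (p - 2)` has derivative `(p - 2) t ^ (p - 3)`, the mean value theorem gives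
`|‖a‖ ^ (p - 2) - ‖b‖ ^ (p - 2)| ≤ (p - 2) (‖a‖ + ‖b‖) ^ (p - 3) ‖a - b‖` pointwise. Multiplying by
`|⟪w, v⟫| ≤ ‖w‖ ‖v‖` and integrating, Hölder's inequality with the exponents
`4 / (p - 3), 4, 4, 4` and `4 / (4 - p)` for the constant function `1` (whose reciprocals sum to `1`)
bounds the integral by the product of `L⁴` norms times `|Ω| ^ ((4 - p) / 4)`.
The same estimate with `y = 0` shows that the integrands are integrable.
-/

open MeasureTheory ENNReal

theorem Real.abs_rpow_sub_rpow_le {q a b : ℝ} (hq : 1 ≤ q) (ha : 0 ≤ a) (hb : 0 ≤ b) :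
    |a ^ q - b ^ q| ≤ q * (a + b) ^ (q - 1) * |a - b| := by
  have hq0 : 0 ≤ q := by linarith
  have hderiv_le : ∀ t ∈ Set.Icc 0 (a + b), ‖q * t ^ (q - 1)‖ ≤ q * (a + b) ^ (q - 1) := by
    intro t ht
    rw [Real.norm_eq_abs, abs_of_nonneg (mul_nonneg hq0 (Real.rpow_nonneg ht.1 _))]
    exact mul_le_mul_of_nonneg_left (Real.rpow_le_rpow ht.1 ht.2 (by linarith)) hq0
  simpa [Real.norm_eq_abs] using Convex.norm_image_sub_le_of_norm_hasDerivWithin_le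
    (fun t _ => (Real.hasDerivAt_rpow_const (Or.inr hq)).hasDerivWithinAt) hderiv_le
    (convex_Icc _ _) ⟨hb, le_add_of_nonneg_left ha⟩ ⟨ha, le_add_of_nonneg_right hb⟩

section Holder

variable {X : Type*} [MeasurableSpace X] {ν : Measure X}

theorem eLpNorm_four_eq_lintegral (f : X → ℝ≥0∞) :
    eLpNorm f 4 ν = (∫⁻ x, f x ^ (4 : ℝ) ∂ν) ^ (1 / 4 : ℝ) := by
  rw [eLpNorm_eq_lintegral_rpow_enorm_toReal (by norm_num) (by norm_num)]
  norm_num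

theorem lintegral_rpow_mul_mul_mul_le {f g h k : X → ℝ≥0∞} (hf : AEMeasurable f ν)
    (hg : AEMeasurable g ν) (hh : AEMeasurable h ν) (hk : AEMeasurable k ν) {s : ℝ}
    (hs0 : 0 ≤ s) (hs1 : s ≤ 1) :
    ∫⁻ x, f x ^ s * g x * h x * k x ∂ν ≤
      eLpNorm f 4 ν ^ s * eLpNorm g 4 ν * eLpNorm h 4 ν * eLpNorm k 4 ν *
        ν Set.univ ^ ((1 - s) / 4) := by
  have := ENNReal.lintegral_prod_norm_pow_le (μ := ν) Finset.univ
    (f := ![(f · ^ (4 : ℝ)), (g · ^ (4 : ℝ)), (h · ^ (4 : ℝ)), (k · ^ (4 : ℝ)), 1])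
    (p := ![s / 4, 1 / 4, 1 / 4, 1 / 4, (1 - s) / 4])
    (by
      intro i _
      fin_cases i
      exacts [hf.pow_const _, hg.pow_const _, hh.pow_const _, hk.pow_const _, aemeasurable_const])
    (by simp [Fin.sum_univ_five]; ring)
    (by intro i _; fin_cases i <;> simp <;> linarith)
  have h4s : 4 * (s / 4) = s := by ring
  have h4 : (4 : ℝ) * (1 / 4) = 1 := by norm_num
  simp only [Fin.prod_univ_five, Matrix.cons_val, Pi.one_apply, one_rpow, mul_one,
    lintegral_one, ← rpow_mul, h4s, h4, rpow_one] at this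
  simpa only [eLpNorm_four_eq_lintegral, ← rpow_mul, one_div_mul_eq_div] using this

end Holder

section InnerProduct

variable {E : Type*} [NormedAddCommGroup E] [InnerProductSpace ℝ E]

theorem enorm_norm_rpow_mul_inner_sub_le {q : ℝ} (hq : 1 ≤ q) (a b w v : E) :
    ‖‖a‖ ^ q * inner ℝ w v - ‖b‖ ^ q * inner ℝ w v‖ₑ ≤
      ENNReal.ofReal q * ((‖a‖ₑ + ‖b‖ₑ) ^ (q - 1) * ‖a - b‖ₑ * ‖w‖ₑ * ‖v‖ₑ) := by
  have hreal : ‖‖a‖ ^ q * inner ℝ w v - ‖b‖ ^ q * inner ℝ w v‖ ≤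
      q * ((‖a‖ + ‖b‖) ^ (q - 1) * ‖a - b‖ * ‖w‖ * ‖v‖) := by
    rw [← sub_mul, norm_mul, Real.norm_eq_abs]
    calc |‖a‖ ^ q - ‖b‖ ^ q| * ‖inner ℝ w v‖
        ≤ q * (‖a‖ + ‖b‖) ^ (q - 1) * ‖a - b‖ * (‖w‖ * ‖v‖) := by
          gcongr
          · exact (Real.abs_rpow_sub_rpow_le hq (norm_nonneg a) (norm_nonneg b)).trans
              (by gcongr; exact abs_norm_sub_norm_le a b)
          · exact norm_inner_le_norm w v
      _ = q * ((‖a‖ + ‖b‖) ^ (q - 1) * ‖a - b‖ * ‖w‖ * ‖v‖) := by ring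
  rw [← ofReal_norm]
  refine (ENNReal.ofReal_le_ofReal hreal).trans_eq ?_
  rw [ENNReal.ofReal_mul (by linarith), ENNReal.ofReal_mul (by positivity),
    ENNReal.ofReal_mul (by positivity), ENNReal.ofReal_mul (by positivity),
    ← ENNReal.ofReal_rpow_of_nonneg (by positivity) (by linarith),
    ENNReal.ofReal_add (norm_nonneg _) (norm_nonneg _)]
  simp only [ofReal_norm]

variable {X : Type*} [MeasurableSpace X] {ν : Measure X} {q : ℝ} {z y w v : X → E}

theorem lintegral_enorm_norm_rpow_mul_inner_sub_le (hq1 : 1 ≤ q) (hq2 : q ≤ 2)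
    (hz : AEStronglyMeasurable z ν) (hy : AEStronglyMeasurable y ν)
    (hw : AEStronglyMeasurable w ν) (hv : AEStronglyMeasurable v ν) :
    ∫⁻ x, ‖‖z x‖ ^ q * inner ℝ (w x) (v x) - ‖y x‖ ^ q * inner ℝ (w x) (v x)‖ₑ ∂ν ≤
      ENNReal.ofReal q * ((eLpNorm z 4 ν + eLpNorm y 4 ν) ^ (q - 1) *
        eLpNorm (fun x => z x - y x) 4 ν * eLpNorm w 4 ν * eLpNorm v 4 ν *
        ν Set.univ ^ ((2 - q) / 4)) := by
  have hsum : eLpNorm (fun x => ‖z x‖ₑ + ‖y x‖ₑ) 4 ν ≤ eLpNorm z 4 ν + eLpNorm y 4 ν := by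
    rw [← eLpNorm_enorm z, ← eLpNorm_enorm y]
    exact eLpNorm_add_le (f := fun x => ‖z x‖ₑ)
      (g := fun x => ‖y x‖ₑ) hz.enorm.aestronglyMeasurable hy.enorm.aestronglyMeasurable
      (by norm_num)
  have hholder := lintegral_rpow_mul_mul_mul_le (f := fun x => ‖z x‖ₑ + ‖y x‖ₑ)
    (g := fun x => ‖z x - y x‖ₑ) (hz.enorm.add hy.enorm) (hz.sub hy).enorm
    hw.enorm hv.enorm (s := q - 1) (by linarith) (by linarith)
  simp only [eLpNorm_enorm, show (1 - (q - 1)) / 4 = (2 - q) / 4 by ring] at hholder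
  calc ∫⁻ x, ‖‖z x‖ ^ q * inner ℝ (w x) (v x) - ‖y x‖ ^ q * inner ℝ (w x) (v x)‖ₑ ∂ν
      ≤ ∫⁻ x, ENNReal.ofReal q *
          ((‖z x‖ₑ + ‖y x‖ₑ) ^ (q - 1) * ‖z x - y x‖ₑ * ‖w x‖ₑ * ‖v x‖ₑ) ∂ν :=
        lintegral_mono fun x => enorm_norm_rpow_mul_inner_sub_le hq1 _ _ _ _
    _ = ENNReal.ofReal q *
          ∫⁻ x, (‖z x‖ₑ + ‖y x‖ₑ) ^ (q - 1) * ‖z x - y x‖ₑ * ‖w x‖ₑ * ‖v x‖ₑ ∂ν :=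
        lintegral_const_mul' _ _ ofReal_ne_top
    _ ≤ _ := by
        gcongr
        exact hholder.trans (by gcongr)

theorem integrable_norm_rpow_mul_inner [IsFiniteMeasure ν] (hq1 : 1 ≤ q) (hq2 : q ≤ 2)
    (hz : MemLp z 4 ν) (hw : MemLp w 4 ν) (hv : MemLp v 4 ν) :
    Integrable (fun x => ‖z x‖ ^ q * inner ℝ (w x) (v x)) ν := by
  refine ⟨((Real.continuous_rpow_const (by linarith)).comp_aestronglyMeasurable
    hz.1.norm).mul (hw.1.inner hv.1), ?_⟩
  -- the case `y = 0` of the difference estimate, as `‖0‖ ^ q = 0`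
  have h := lintegral_enorm_norm_rpow_mul_inner_sub_le (y := 0) hq1 hq2 hz.1
    aestronglyMeasurable_const hw.1 hv.1
  simp only [Pi.zero_apply, norm_zero, Real.zero_rpow (by linarith : q ≠ 0), zero_mul,
    sub_zero, eLpNorm_zero, add_zero] at h
  refine h.trans_lt (lt_top_iff_ne_top.2 ?_)
  have := hz.eLpNorm_lt_top.ne
  have := hw.eLpNorm_lt_top.ne
  have := hv.eLpNorm_lt_top.ne
  finiteness

theorem abs_integral_norm_rpow_mul_inner_sub_le [IsFiniteMeasure ν] (hq1 : 1 ≤ q) (hq2 : q ≤ 2)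
    (hz : MemLp z 4 ν) (hy : MemLp y 4 ν) (hw : MemLp w 4 ν) (hv : MemLp v 4 ν) :
    |∫ x, ‖z x‖ ^ q * inner ℝ (w x) (v x) ∂ν - ∫ x, ‖y x‖ ^ q * inner ℝ (w x) (v x) ∂ν| ≤
      q * ν.real Set.univ ^ ((2 - q) / 4) *
        ((eLpNorm z 4 ν).toReal + (eLpNorm y 4 ν).toReal) ^ (q - 1) *
        (eLpNorm (fun x => z x - y x) 4 ν).toReal * (eLpNorm w 4 ν).toReal *
        (eLpNorm v 4 ν).toReal := by
  rw [← integral_sub (integrable_norm_rpow_mul_inner hq1 hq2 hz hw hv)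
    (integrable_norm_rpow_mul_inner hq1 hq2 hy hw hv), ← Real.norm_eq_abs, ← toReal_enorm]
  have hbound := (enorm_integral_le_lintegral_enorm _).trans
    (lintegral_enorm_norm_rpow_mul_inner_sub_le hq1 hq2 hz.1 hy.1 hw.1 hv.1)
  have hz_fin := hz.eLpNorm_lt_top.ne
  have hy_fin := hy.eLpNorm_lt_top.ne
  have := (hz.sub hy).eLpNorm_lt_top.ne
  have := hw.eLpNorm_lt_top.ne
  have := hv.eLpNorm_lt_top.ne
  refine (ENNReal.toReal_mono (by finiteness) hbound).trans_eq ?_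
  simp only [toReal_mul, toReal_ofReal (by linarith : 0 ≤ q), ← toReal_rpow,
    toReal_add hz_fin hy_fin, measureReal_def]
  ring

end InnerProduct

theorem stmt18_general (μ : Measure (EuclideanSpace ℝ (Fin 2)))
    (Ω : Set (EuclideanSpace ℝ (Fin 2))) (hfin : μ Ω < ⊤)
    (p : ℝ) (hp : p ∈ Set.Icc (3 : ℝ) 4) (F : ℝ) (hF : 0 < F) :
    ∃ ℓ > 0, ∀ z y w v : EuclideanSpace ℝ (Fin 2) → EuclideanSpace ℝ (Fin 2),
      MemLp z 4 (μ.restrict Ω) → MemLp y 4 (μ.restrict Ω) →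
      MemLp w 4 (μ.restrict Ω) → MemLp v 4 (μ.restrict Ω) →
      |F * ∫ x, ‖z x‖ ^ (p - 2) * (inner ℝ (w x) (v x) : ℝ) ∂(μ.restrict Ω) -
          F * ∫ x, ‖y x‖ ^ (p - 2) * (inner ℝ (w x) (v x) : ℝ) ∂(μ.restrict Ω)| ≤
        ℓ * ((eLpNorm z 4 (μ.restrict Ω)).toReal +
              (eLpNorm y 4 (μ.restrict Ω)).toReal) ^ (p - 3) *
          (eLpNorm (fun x => z x - y x) 4 (μ.restrict Ω)).toReal *
          (eLpNorm w 4 (μ.restrict Ω)).toReal *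
          (eLpNorm v 4 (μ.restrict Ω)).toReal := by
  obtain ⟨hp3, hp4⟩ := hp
  have : IsFiniteMeasure (μ.restrict Ω) := isFiniteMeasure_restrict.2 hfin.ne
  have hq : 0 < p - 2 := by linarith
  refine ⟨F * (p - 2) * ((μ.restrict Ω).real Set.univ ^ ((2 - (p - 2)) / 4) + 1), by positivity,
    fun z y w v hz hy hw hv => ?_⟩
  have hbound := abs_integral_norm_rpow_mul_inner_sub_le (q := p - 2) (by linarith) (by linarith)
    hz hy hw hv
  rw [← mul_sub, abs_mul, abs_of_pos hF, show p - 3 = p - 2 - 1 by ring]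
  refine (mul_le_mul_of_nonneg_left hbound hF.le).trans ?_
  simp only [← mul_assoc]
  gcongr
  linarith

theorem stmt18 (μ : Measure (EuclideanSpace ℝ (Fin 2)))
    (Ω : Set (EuclideanSpace ℝ (Fin 2))) (hΩ : MeasurableSet Ω) (hfin : μ Ω < ⊤)
    (p : ℝ) (hp : p ∈ Set.Icc (3 : ℝ) 4) (F : ℝ) (hF : 0 < F) :
    ∃ ℓ > 0, ∀ z y w v : EuclideanSpace ℝ (Fin 2) → EuclideanSpace ℝ (Fin 2),
      MemLp z 4 (μ.restrict Ω) → MemLp y 4 (μ.restrict Ω) →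
      MemLp w 4 (μ.restrict Ω) → MemLp v 4 (μ.restrict Ω) →
      |F * ∫ x, ‖z x‖ ^ (p - 2) * (inner ℝ (w x) (v x) : ℝ) ∂(μ.restrict Ω) -
          F * ∫ x, ‖y x‖ ^ (p - 2) * (inner ℝ (w x) (v x) : ℝ) ∂(μ.restrict Ω)| ≤
        ℓ * ((eLpNorm z 4 (μ.restrict Ω)).toReal +
              (eLpNorm y 4 (μ.restrict Ω)).toReal) ^ (p - 3) *
          (eLpNorm (fun x => z x - y x) 4 (μ.restrict Ω)).toReal *
          (eLpNorm w 4 (μ.restrict Ω)).toReal *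
          (eLpNorm v 4 (μ.restrict Ω)).toReal :=
  stmt18_general μ Ω hfin p hp F hF
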